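/- Let n ≥ 1, let D ⊆ ℝ^{2n} be open, and let J : D → (ℝ^{2n} →L[ℝ] ℝ^{2n}) be a C¹ map with J(x) ∘ J(x) = −id for every x ∈ D. Write E = ℝ^{2n}, let E* be its real dual, and write DJ(x)(v) := (fderiv J x)(v) ∈ E →L[ℝ] E for v ∈ E. Define, for (x,p) ∈ D × E*, the bilinear map s_{(x,p)} : E × E → ℝ by s_{(x,p)}(ξ, w) := (1/2)[ p((DJ(x)(ξ))(w)) − p((DJ(x)(w))(ξ)) + p( J(x)((DJ(x)(J(x)w))(ξ)) ) − p( J(x)((DJ(x)(J(x)ξ))(w)) ) ], and the linear endomorphism 𝕁̃_{(x,p)} of E × E* by 𝕁̃_{(x,p)}(ξ, σ) := ( J(x)ξ , σ ∘ J(x) + s_{(x,p)}(ξ, ·) ). Then 𝕁̃_{(x,p)} ∘ 𝕁̃_{(x,p)} = −id for every (x,p) ∈ D × E*. (The canonical lift 𝕁̃ of J to the cotangent bundle is an almost complex structure.) -/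

import Mathlib

/-- The bilinear correction term of the canonical lift of `J` to the cotangent bundle:
`s_{(x,p)}(ξ, w) := (1/2)[ p((DJ(x)(ξ))(w)) − p((DJ(x)(w))(ξ))
  + p(J(x)((DJ(x)(J(x)w))(ξ))) − p(J(x)((DJ(x)(J(x)ξ))(w))) ]`. -/
noncomputable def cotS {E : Type*} [NormedAddCommGroup E] [NormedSpace ℝ E]
    (J : E → (E →L[ℝ] E)) (x : E) (p : E →L[ℝ] ℝ) (ξ w : E) : ℝ :=
  (1 / 2) * (p ((fderiv ℝ J x ξ) w) - p ((fderiv ℝ J x w) ξ)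
    + p (J x ((fderiv ℝ J x (J x w)) ξ)) - p (J x ((fderiv ℝ J x (J x ξ)) w)))

/-- The canonical lift of `J` to the cotangent bundle `D × E*`, at the point `(x, p)`,
applied to a tangent vector `(ξ, σ)` (with the covector component viewed as a
function `E → ℝ`): `𝕁̃_{(x,p)}(ξ, σ) = (J(x)ξ, σ ∘ J(x) + s_{(x,p)}(ξ, ·))`. -/
noncomputable def cotLift {E : Type*} [NormedAddCommGroup E] [NormedSpace ℝ E]
    (J : E → (E →L[ℝ] E)) (x : E) (p : E →L[ℝ] ℝ) :
    (E × (E → ℝ)) → (E × (E → ℝ)) :=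
  fun ζ => (J x ζ.1, fun w => ζ.2 (J x w) + cotS J x p ζ.1 w)

/-- The canonical lift `𝕁̃` of `J` to the cotangent bundle squares to `−id`. -/
theorem stmt_10 {n : ℕ} (hn : 1 ≤ n)
    (D : Set (EuclideanSpace ℝ (Fin (2 * n)))) (hD : IsOpen D)
    (J : EuclideanSpace ℝ (Fin (2 * n)) →
      (EuclideanSpace ℝ (Fin (2 * n)) →L[ℝ] EuclideanSpace ℝ (Fin (2 * n))))
    (hJ : ContDiffOn ℝ 1 J D)
    (hJsq : ∀ x ∈ D, (J x).comp (J x) =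
      - ContinuousLinearMap.id ℝ (EuclideanSpace ℝ (Fin (2 * n)))) :
    ∀ x ∈ D, ∀ p : EuclideanSpace ℝ (Fin (2 * n)) →L[ℝ] ℝ,
      ∀ ξ : EuclideanSpace ℝ (Fin (2 * n)),
      ∀ σ : EuclideanSpace ℝ (Fin (2 * n)) →L[ℝ] ℝ,
        cotLift J x p (cotLift J x p (ξ, fun w => σ w)) =
          (-ξ, fun w => -(σ w)) := by
  intro x hx p ξ σ
  have hdJ : DifferentiableAt ℝ J x :=
    (hJ.contDiffAt (hD.mem_nhds hx)).differentiableAt one_ne_zero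
  set A := fderiv ℝ J x with hA
  have hJ2 : ∀ u, J x (J x u) = -u := by
    intro u
    have := congrArg (fun L => L u) (hJsq x hx)
    simpa using this
  have hF0 : HasFDerivAt (fun y => (J y).comp (J y)) (0 : EuclideanSpace ℝ (Fin (2 * n)) →L[ℝ] (EuclideanSpace ℝ (Fin (2 * n)) →L[ℝ] EuclideanSpace ℝ (Fin (2 * n)))) x := by
    have hev : (fun y => (J y).comp (J y)) =ᶠ[nhds x]
        (fun _ => - ContinuousLinearMap.id ℝ (EuclideanSpace ℝ (Fin (2 * n)))) := by
      filter_upwards [hD.mem_nhds hx] with y hy using hJsq y hy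
    exact (hasFDerivAt_const _ _).congr_of_eventuallyEq hev
  have hF := hdJ.hasFDerivAt.clm_comp hdJ.hasFDerivAt
  have hkey := hF.unique hF0
  have hAJ : ∀ v u, A v (J x u) = -(J x (A v u)) := by
    intro v u
    have h1 := congrArg (fun L => L v u) hkey
    simp at h1
    rw [hA, eq_neg_iff_add_eq_zero, add_comm]
    exact h1
  simp only [cotLift]
  refine Prod.ext ?_ (funext fun w => ?_)
  · simpa using hJ2 ξ
  · simp only [cotS, ← hA, hJ2, hAJ, map_neg, ContinuousLinearMap.neg_apply, neg_neg]
    ring
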